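/- Assume g satisfies conditions (A1)–(A4), and for z ≥ 0 let f_z be the solution of Stein's equation f'(w) − f(w)g(w) = I(w≤z) − F(z), explicitly f_z(w) = F(w)(1−F(z))/p(w) for w ≤ z and f_z(w) = F(z)(1−F(w))/p(w) for w > z. Then: (i) |f_z(w)g(w)| ≤ 1−F(z) for w ≤ 0 and |f_z(w)g(w)| ≤ F(z) for w > 0; (ii) f_z(w) ≤ (1−F(z))/c₁ for w ≤ 0 and f_z(w) ≤ F(z)/c₁ for w > 0; (iii) |f_z'(w)| ≤ 2(1−F(z)) for w ≤ 0, |f_z'(w)| ≤ 1 for 0 < w ≤ z, and |f_z'(w)| ≤ 2F(z) for w > z. -/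

import Mathlib

open MeasureTheory Real

/-- Conditions (A1)–(A4) on the function `g`. -/
structure GCond (g : ℝ → ℝ) (c₂ c₃ : ℝ) : Prop where
  diff : Differentiable ℝ g
  mono : Monotone g
  zero : g 0 = 0
  sign : ∀ y : ℝ, y ≠ 0 → 0 < y * g y
  c₂pos : 0 < c₂
  subadd : ∀ x y : ℝ, |g (x + y)| ≤ c₂ * (|g x| + |g y| + 1)
  c₃ge : 1 ≤ c₃
  derivBound : ∀ y : ℝ, |deriv g y| ≤ c₃ * (1 + |g y|) / (1 + |y|)

/-- `G(y) = ∫₀^y g`. -/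
noncomputable def Gfun (g : ℝ → ℝ) (y : ℝ) : ℝ := ∫ t in (0:ℝ)..y, g t

/-- The density `p(y) = c₁ e^{-G(y)}`. -/
noncomputable def pfun (g : ℝ → ℝ) (c₁ y : ℝ) : ℝ := c₁ * Real.exp (-(Gfun g y))

/-- The distribution function `F(w) = ∫_{-∞}^w p`. -/
noncomputable def Ffun (g : ℝ → ℝ) (c₁ w : ℝ) : ℝ := ∫ y in Set.Iic w, pfun g c₁ y

/-- The solution `f_z` of the Stein equation `f'(w) - f(w) g(w) = I(w ≤ z) - F(z)`. -/
noncomputable def steinSol (g : ℝ → ℝ) (c₁ z w : ℝ) : ℝ :=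
  if w ≤ z then Ffun g c₁ w * (1 - Ffun g c₁ z) / pfun g c₁ w
  else Ffun g c₁ z * (1 - Ffun g c₁ w) / pfun g c₁ w

/-!
Writing `f_z(w) = min (F(w)(1 - F(z))) (F(z)(1 - F(w))) / p(w)`, everything reduces to four
Mills-ratio type bounds on `F / p` and `(1 - F) / p`.

Since `p' = -g p` and `g` is nondecreasing, integrating `p'` over `(-∞, w]` and over `[w, ∞)`
gives `-g(w) F(w) ≤ p(w)` and `g(w) (1 - F(w)) ≤ p(w)`, which is (i).

Since `g` is nondecreasing, `G` is superadditive on each half-line, so `p(y) ≤ e^{-G(w)} p(y - w)`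
whenever `y` lies beyond `w` on the side of `w`; integrating in `y` gives `F(w) ≤ e^{-G(w)}` for
`w ≤ 0` and `1 - F(w) ≤ e^{-G(w)}` for `w ≥ 0`, which is (ii).

Away from `z`, `f_z' = 1{w ≤ z} - F(z) + f_z g`, so (iii) follows from (i) and `f_z g ≥ 0` on
`w ≥ 0`; at `w = z` the one-sided derivatives differ by `1`, so `deriv` takes its junk value `0`.
-/

open Set Filter

section Potential

variable {g : ℝ → ℝ}

theorem hasDerivAt_Gfun (hmono : Continuous g) (y : ℝ) : HasDerivAt (Gfun g) (g y) y :=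
  (hmono.integral_hasStrictDerivAt 0 y).hasDerivAt

theorem Gfun_add_sub_Gfun (hmono : Monotone g) (u w : ℝ) :
    Gfun g (u + w) - Gfun g w = ∫ t in (0 : ℝ)..u, g (t + w) := by
  rw [Gfun, Gfun, intervalIntegral.integral_interval_sub_left hmono.intervalIntegrable
    hmono.intervalIntegrable, intervalIntegral.integral_comp_add_right, zero_add]

theorem Gfun_add_le_of_nonneg (hmono : Monotone g) {u w : ℝ} (hu : 0 ≤ u) (hw : 0 ≤ w) :
    Gfun g u + Gfun g w ≤ Gfun g (u + w) := by
  have hgw : Monotone fun t => g (t + w) := fun a b h => hmono (by linarith)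
  have : Gfun g u ≤ ∫ t in (0 : ℝ)..u, g (t + w) :=
    intervalIntegral.integral_mono_on hu hmono.intervalIntegrable hgw.intervalIntegrable
      fun t _ => hmono (le_add_of_nonneg_right hw)
  linarith [Gfun_add_sub_Gfun hmono u w]

theorem Gfun_add_le_of_nonpos (hmono : Monotone g) {u w : ℝ} (hu : u ≤ 0) (hw : w ≤ 0) :
    Gfun g u + Gfun g w ≤ Gfun g (u + w) := by
  have hgw : Monotone fun t => g (t + w) := fun a b h => hmono (by linarith)
  have : ∫ t in u..0, g (t + w) ≤ ∫ t in u..0, g t :=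
    intervalIntegral.integral_mono_on hu hgw.intervalIntegrable hmono.intervalIntegrable
      fun t _ => hmono (add_le_of_nonpos_right hw)
  have hGu : Gfun g u = -∫ t in u..0, g t := intervalIntegral.integral_symm _ _
  have hGuw := Gfun_add_sub_Gfun hmono u w
  rw [intervalIntegral.integral_symm] at hGuw
  linarith

end Potential

theorem setIntegral_le_mul_integral_of_le_mul_comp_sub {p : ℝ → ℝ} (hp : Integrable p)
    (hp0 : ∀ y, 0 ≤ p y) {s : Set ℝ} (hs : MeasurableSet s) {K w : ℝ} (hK : 0 ≤ K)
    (h : ∀ y ∈ s, p y ≤ K * p (y - w)) : ∫ y in s, p y ≤ K * ∫ y, p y :=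
  calc ∫ y in s, p y ≤ ∫ y in s, K * p (y - w) :=
        setIntegral_mono_on hp.integrableOn ((hp.comp_sub_right w).const_mul K).integrableOn hs h
    _ ≤ ∫ y, K * p (y - w) :=
        setIntegral_le_integral ((hp.comp_sub_right w).const_mul K)
          (Eventually.of_forall fun y => mul_nonneg hK (hp0 _))
    _ = K * ∫ y, p y := by rw [integral_const_mul, integral_sub_right_eq_self]

section Density

variable {g : ℝ → ℝ} {c₁ : ℝ}

theorem pfun_pos (hc₁ : 0 < c₁) (y : ℝ) : 0 < pfun g c₁ y :=
  mul_pos hc₁ (exp_pos _)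

theorem hasDerivAt_pfun (hcont : Continuous g) (y : ℝ) :
    HasDerivAt (pfun g c₁) (-g y * pfun g c₁ y) y :=
  ((hasDerivAt_Gfun hcont y).neg.exp.const_mul c₁).congr_deriv (by rw [pfun, Pi.neg_apply]; ring)

theorem continuous_pfun (hcont : Continuous g) : Continuous (pfun g c₁) :=
  continuous_iff_continuousAt.2 fun y => (hasDerivAt_pfun hcont y).continuousAt

theorem integral_mul_pfun (hcont : Continuous g) (a b : ℝ) :
    ∫ y in a..b, g y * pfun g c₁ y = pfun g c₁ a - pfun g c₁ b := by
  rw [intervalIntegral.integral_eq_sub_of_hasDerivAt (f := -pfun g c₁)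
    (f' := fun y => g y * pfun g c₁ y)
    (fun y _ => by simpa using (hasDerivAt_pfun hcont y).neg)
    ((hcont.mul (continuous_pfun hcont)).intervalIntegrable a b), Pi.neg_apply, Pi.neg_apply]
  ring

theorem pfun_le_exp_mul_pfun_sub (hc₁ : 0 < c₁) {y w : ℝ}
    (hG : Gfun g (y - w) + Gfun g w ≤ Gfun g y) :
    pfun g c₁ y ≤ exp (-Gfun g w) * pfun g c₁ (y - w) := by
  simp only [pfun]
  rw [mul_left_comm, ← exp_add]
  gcongr
  linarith

theorem Ffun_nonneg (hc₁ : 0 < c₁) (w : ℝ) : 0 ≤ Ffun g c₁ w :=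
  setIntegral_nonneg measurableSet_Iic fun y _ => (pfun_pos hc₁ y).le

variable (hnorm : ∫ y, pfun g c₁ y = 1)
include hnorm

theorem integrable_pfun : Integrable (pfun g c₁) :=
  Integrable.of_integral_ne_zero (by simp [hnorm])

theorem Ffun_sub_Ffun (a b : ℝ) : Ffun g c₁ b - Ffun g c₁ a = ∫ y in a..b, pfun g c₁ y :=
  intervalIntegral.integral_Iic_sub_Iic (integrable_pfun hnorm).integrableOn
    (integrable_pfun hnorm).integrableOn

theorem one_sub_Ffun (w : ℝ) : 1 - Ffun g c₁ w = ∫ y in Ioi w, pfun g c₁ y := by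
  rw [← hnorm, ← intervalIntegral.integral_Iic_add_Ioi (integrable_pfun hnorm).integrableOn
    (integrable_pfun hnorm).integrableOn, Ffun, add_sub_cancel_left]

theorem hasDerivAt_Ffun (hcont : Continuous g) (w : ℝ) :
    HasDerivAt (Ffun g c₁) (pfun g c₁ w) w := by
  have : Ffun g c₁ = fun u => Ffun g c₁ 0 + ∫ y in (0 : ℝ)..u, pfun g c₁ y := by
    funext u
    rw [← Ffun_sub_Ffun hnorm, add_sub_cancel]
  rw [this]
  exact ((continuous_pfun hcont).integral_hasStrictDerivAt 0 w).hasDerivAt.const_add _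

theorem Ffun_le_one (hc₁ : 0 < c₁) (w : ℝ) : Ffun g c₁ w ≤ 1 :=
  hnorm ▸ setIntegral_le_integral (integrable_pfun hnorm)
    (Eventually.of_forall fun y => (pfun_pos hc₁ y).le)

theorem Ffun_mono (hc₁ : 0 < c₁) : Monotone (Ffun g c₁) := fun a b hab =>
  sub_nonneg.1 <| Ffun_sub_Ffun hnorm a b ▸
    intervalIntegral.integral_nonneg hab fun y _ => (pfun_pos hc₁ y).le

theorem neg_mul_Ffun_le_pfun (hmono : Monotone g) (hcont : Continuous g) (hc₁ : 0 < c₁)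
    (w : ℝ) : -g w * Ffun g c₁ w ≤ pfun g c₁ w := by
  have key (a : ℝ) (ha : a ≤ w) : -g w * ∫ y in a..w, pfun g c₁ y ≤ pfun g c₁ w :=
    calc -g w * ∫ y in a..w, pfun g c₁ y = ∫ y in a..w, -g w * pfun g c₁ y :=
          (intervalIntegral.integral_const_mul _ _).symm
      _ ≤ ∫ y in a..w, -(g y * pfun g c₁ y) :=
          intervalIntegral.integral_mono_on ha
            ((continuous_const.mul (continuous_pfun hcont)).intervalIntegrable a w)
            ((hcont.mul (continuous_pfun hcont)).neg.intervalIntegrable a w)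
            fun y hy => by
              rw [← neg_mul]
              exact mul_le_mul_of_nonneg_right (neg_le_neg (hmono hy.2)) (pfun_pos hc₁ y).le
      _ = pfun g c₁ w - pfun g c₁ a := by
          rw [intervalIntegral.integral_neg, integral_mul_pfun hcont, neg_sub]
      _ ≤ pfun g c₁ w := sub_le_self _ (pfun_pos hc₁ a).le
  exact le_of_tendsto ((intervalIntegral_tendsto_integral_Iic w
    (integrable_pfun hnorm).integrableOn tendsto_id).const_mul _) (eventually_atBot.2 ⟨w, key⟩)

theorem mul_one_sub_Ffun_le_pfun (hmono : Monotone g) (hcont : Continuous g) (hc₁ : 0 < c₁)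
    (w : ℝ) : g w * (1 - Ffun g c₁ w) ≤ pfun g c₁ w := by
  have key (b : ℝ) (hb : w ≤ b) : g w * ∫ y in w..b, pfun g c₁ y ≤ pfun g c₁ w :=
    calc g w * ∫ y in w..b, pfun g c₁ y = ∫ y in w..b, g w * pfun g c₁ y :=
          (intervalIntegral.integral_const_mul _ _).symm
      _ ≤ ∫ y in w..b, g y * pfun g c₁ y :=
          intervalIntegral.integral_mono_on hb
            ((continuous_const.mul (continuous_pfun hcont)).intervalIntegrable w b)
            ((hcont.mul (continuous_pfun hcont)).intervalIntegrable w b)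
            fun y hy => mul_le_mul_of_nonneg_right (hmono hy.1) (pfun_pos hc₁ y).le
      _ = pfun g c₁ w - pfun g c₁ b := integral_mul_pfun hcont w b
      _ ≤ pfun g c₁ w := sub_le_self _ (pfun_pos hc₁ b).le
  rw [one_sub_Ffun hnorm]
  exact le_of_tendsto ((intervalIntegral_tendsto_integral_Ioi w
    (integrable_pfun hnorm).integrableOn tendsto_id).const_mul _) (eventually_atTop.2 ⟨w, key⟩)

theorem Ffun_le_exp_neg_Gfun (hmono : Monotone g) (hc₁ : 0 < c₁) {w : ℝ} (hw : w ≤ 0) :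
    Ffun g c₁ w ≤ exp (-Gfun g w) := by
  have := setIntegral_le_mul_integral_of_le_mul_comp_sub (integrable_pfun hnorm)
    (fun y => (pfun_pos hc₁ y).le) measurableSet_Iic (exp_pos _).le fun y (hy : y ≤ w) =>
      pfun_le_exp_mul_pfun_sub hc₁ (by
        simpa using Gfun_add_le_of_nonpos hmono (sub_nonpos.2 hy) hw)
  rwa [hnorm, mul_one] at this

theorem one_sub_Ffun_le_exp_neg_Gfun (hmono : Monotone g) (hc₁ : 0 < c₁) {w : ℝ}
    (hw : 0 ≤ w) : 1 - Ffun g c₁ w ≤ exp (-Gfun g w) := by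
  have := setIntegral_le_mul_integral_of_le_mul_comp_sub (integrable_pfun hnorm)
    (fun y => (pfun_pos hc₁ y).le) measurableSet_Ioi (exp_pos _).le fun y (hy : w < y) =>
      pfun_le_exp_mul_pfun_sub hc₁ (by
        simpa using Gfun_add_le_of_nonneg hmono (sub_nonneg.2 hy.le) hw)
  rwa [hnorm, mul_one, ← one_sub_Ffun hnorm] at this

theorem hasDerivAt_Ffun_div_pfun (hcont : Continuous g) (hc₁ : 0 < c₁) (w : ℝ) :
    HasDerivAt (fun u => Ffun g c₁ u / pfun g c₁ u)
      (1 + Ffun g c₁ w / pfun g c₁ w * g w) w :=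
  ((hasDerivAt_Ffun hnorm hcont w).div (hasDerivAt_pfun hcont w) (pfun_pos hc₁ w).ne').congr_deriv
    (by field_simp [(pfun_pos hc₁ w).ne']; ring)

theorem hasDerivAt_one_sub_Ffun_div_pfun (hcont : Continuous g) (hc₁ : 0 < c₁) (w : ℝ) :
    HasDerivAt (fun u => (1 - Ffun g c₁ u) / pfun g c₁ u)
      (-1 + (1 - Ffun g c₁ w) / pfun g c₁ w * g w) w :=
  (((hasDerivAt_Ffun hnorm hcont w).const_sub 1).div (hasDerivAt_pfun hcont w)
    (pfun_pos hc₁ w).ne').congr_deriv (by field_simp [(pfun_pos hc₁ w).ne']; ring)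

end Density

section Stein

variable {g : ℝ → ℝ} {c₁ z w : ℝ}

theorem steinSol_of_le (h : w ≤ z) :
    steinSol g c₁ z w = (1 - Ffun g c₁ z) * (Ffun g c₁ w / pfun g c₁ w) := by
  rw [steinSol, if_pos h]
  ring

theorem steinSol_of_ge (h : z ≤ w) :
    steinSol g c₁ z w = Ffun g c₁ z * ((1 - Ffun g c₁ w) / pfun g c₁ w) := by
  rcases h.lt_or_eq with hlt | rfl
  · rw [steinSol, if_neg hlt.not_ge, mul_div_assoc]
  · rw [steinSol_of_le le_rfl]
    ring

variable (hc₁ : 0 < c₁) (hnorm : ∫ y, pfun g c₁ y = 1)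
include hc₁ hnorm

theorem steinSol_eq_min (z w : ℝ) :
    steinSol g c₁ z w =
      min (Ffun g c₁ w * (1 - Ffun g c₁ z)) (Ffun g c₁ z * (1 - Ffun g c₁ w)) / pfun g c₁ w := by
  rw [steinSol]
  split_ifs with h
  · rw [min_eq_left (by linarith [Ffun_mono hnorm hc₁ h])]
  · rw [min_eq_right (by linarith [Ffun_mono hnorm hc₁ (not_le.1 h).le])]

theorem steinSol_nonneg : 0 ≤ steinSol g c₁ z w := by
  have hF₀ := Ffun_nonneg (g := g) hc₁
  have hF₁ := Ffun_le_one hnorm hc₁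
  rw [steinSol_eq_min hc₁ hnorm]
  exact div_nonneg (le_min (mul_nonneg (hF₀ w) (sub_nonneg.2 (hF₁ z)))
    (mul_nonneg (hF₀ z) (sub_nonneg.2 (hF₁ w)))) (pfun_pos hc₁ w).le

theorem steinSol_le_mul_Ffun_div_pfun :
    steinSol g c₁ z w ≤ (1 - Ffun g c₁ z) * (Ffun g c₁ w / pfun g c₁ w) := by
  rw [steinSol_eq_min hc₁ hnorm, ← mul_div_assoc, mul_comm (1 - _)]
  exact div_le_div_of_nonneg_right (min_le_left _ _) (pfun_pos hc₁ w).le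

theorem steinSol_le_mul_one_sub_Ffun_div_pfun :
    steinSol g c₁ z w ≤ Ffun g c₁ z * ((1 - Ffun g c₁ w) / pfun g c₁ w) := by
  rw [steinSol_eq_min hc₁ hnorm, ← mul_div_assoc]
  exact div_le_div_of_nonneg_right (min_le_right _ _) (pfun_pos hc₁ w).le

variable {c₂ c₃ : ℝ} (hg : GCond g c₂ c₃)
include hg

theorem abs_steinSol_mul_le_of_nonpos (hw : w ≤ 0) :
    |steinSol g c₁ z w * g w| ≤ 1 - Ffun g c₁ z := by
  have hgw : g w ≤ 0 := (hg.mono hw).trans_eq hg.zero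
  rw [abs_of_nonpos (mul_nonpos_of_nonneg_of_nonpos (steinSol_nonneg hc₁ hnorm) hgw), ← mul_neg]
  calc steinSol g c₁ z w * -g w
      ≤ (1 - Ffun g c₁ z) * (Ffun g c₁ w / pfun g c₁ w) * -g w :=
        mul_le_mul_of_nonneg_right (steinSol_le_mul_Ffun_div_pfun hc₁ hnorm) (neg_nonneg.2 hgw)
    _ = (1 - Ffun g c₁ z) * (-g w * Ffun g c₁ w / pfun g c₁ w) := by ring
    _ ≤ (1 - Ffun g c₁ z) * 1 :=
        mul_le_mul_of_nonneg_left ((div_le_one (pfun_pos hc₁ w)).2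
          (neg_mul_Ffun_le_pfun hnorm hg.mono hg.diff.continuous hc₁ w))
          (sub_nonneg.2 (Ffun_le_one hnorm hc₁ z))
    _ = 1 - Ffun g c₁ z := mul_one _

theorem steinSol_mul_nonneg (hw : 0 ≤ w) : 0 ≤ steinSol g c₁ z w * g w :=
  mul_nonneg (steinSol_nonneg hc₁ hnorm) (hg.zero.symm.trans_le (hg.mono hw))

theorem abs_steinSol_mul_le_of_nonneg (hw : 0 ≤ w) :
    |steinSol g c₁ z w * g w| ≤ Ffun g c₁ z := by
  have hgw : 0 ≤ g w := hg.zero.symm.trans_le (hg.mono hw)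
  rw [abs_of_nonneg (steinSol_mul_nonneg hc₁ hnorm hg hw)]
  calc steinSol g c₁ z w * g w
      ≤ Ffun g c₁ z * ((1 - Ffun g c₁ w) / pfun g c₁ w) * g w :=
        mul_le_mul_of_nonneg_right (steinSol_le_mul_one_sub_Ffun_div_pfun hc₁ hnorm) hgw
    _ = Ffun g c₁ z * (g w * (1 - Ffun g c₁ w) / pfun g c₁ w) := by ring
    _ ≤ Ffun g c₁ z * 1 :=
        mul_le_mul_of_nonneg_left ((div_le_one (pfun_pos hc₁ w)).2
          (mul_one_sub_Ffun_le_pfun hnorm hg.mono hg.diff.continuous hc₁ w))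
          (Ffun_nonneg hc₁ z)
    _ = Ffun g c₁ z := mul_one _

theorem steinSol_le_of_nonpos (hw : w ≤ 0) :
    steinSol g c₁ z w ≤ (1 - Ffun g c₁ z) / c₁ :=
  calc steinSol g c₁ z w ≤ (1 - Ffun g c₁ z) * (Ffun g c₁ w / pfun g c₁ w) :=
        steinSol_le_mul_Ffun_div_pfun hc₁ hnorm
    _ = (1 - Ffun g c₁ z) / c₁ * (Ffun g c₁ w / exp (-Gfun g w)) := by rw [pfun]; ring
    _ ≤ (1 - Ffun g c₁ z) / c₁ * 1 :=
        mul_le_mul_of_nonneg_left ((div_le_one (exp_pos _)).2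
          (Ffun_le_exp_neg_Gfun hnorm hg.mono hc₁ hw))
          (div_nonneg (sub_nonneg.2 (Ffun_le_one hnorm hc₁ z)) hc₁.le)
    _ = (1 - Ffun g c₁ z) / c₁ := mul_one _

theorem steinSol_le_of_nonneg (hw : 0 ≤ w) :
    steinSol g c₁ z w ≤ Ffun g c₁ z / c₁ :=
  calc steinSol g c₁ z w ≤ Ffun g c₁ z * ((1 - Ffun g c₁ w) / pfun g c₁ w) :=
        steinSol_le_mul_one_sub_Ffun_div_pfun hc₁ hnorm
    _ = Ffun g c₁ z / c₁ * ((1 - Ffun g c₁ w) / exp (-Gfun g w)) := by rw [pfun]; ring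
    _ ≤ Ffun g c₁ z / c₁ * 1 :=
        mul_le_mul_of_nonneg_left ((div_le_one (exp_pos _)).2
          (one_sub_Ffun_le_exp_neg_Gfun hnorm hg.mono hc₁ hw))
          (div_nonneg (Ffun_nonneg hc₁ z) hc₁.le)
    _ = Ffun g c₁ z / c₁ := mul_one _

theorem hasDerivWithinAt_steinSol_Iic (hw : w ≤ z) :
    HasDerivWithinAt (steinSol g c₁ z) (1 - Ffun g c₁ z + steinSol g c₁ z w * g w) (Iic z) w := by
  have h := (hasDerivAt_Ffun_div_pfun hnorm hg.diff.continuous hc₁ w).const_mul (1 - Ffun g c₁ z)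
  refine (h.hasDerivWithinAt.congr_of_mem (fun _ hu => steinSol_of_le hu) hw).congr_deriv ?_
  rw [steinSol_of_le hw]
  ring

theorem hasDerivWithinAt_steinSol_Ici (hw : z ≤ w) :
    HasDerivWithinAt (steinSol g c₁ z) (-Ffun g c₁ z + steinSol g c₁ z w * g w) (Ici z) w := by
  have h := (hasDerivAt_one_sub_Ffun_div_pfun hnorm hg.diff.continuous hc₁ w).const_mul
    (Ffun g c₁ z)
  refine (h.hasDerivWithinAt.congr_of_mem (fun _ hu => steinSol_of_ge hu) hw).congr_deriv ?_
  rw [steinSol_of_ge hw]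
  ring

theorem deriv_steinSol_of_lt (hw : w < z) :
    deriv (steinSol g c₁ z) w = 1 - Ffun g c₁ z + steinSol g c₁ z w * g w :=
  ((hasDerivWithinAt_steinSol_Iic hc₁ hnorm hg hw.le).hasDerivAt (Iic_mem_nhds hw)).deriv

theorem deriv_steinSol_of_gt (hw : z < w) :
    deriv (steinSol g c₁ z) w = -Ffun g c₁ z + steinSol g c₁ z w * g w :=
  ((hasDerivWithinAt_steinSol_Ici hc₁ hnorm hg hw.le).hasDerivAt (Ici_mem_nhds hw)).deriv

theorem deriv_steinSol_self : deriv (steinSol g c₁ z) z = 0 := by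
  refine deriv_zero_of_not_differentiableAt fun hd => ?_
  have hleft := (uniqueDiffWithinAt_Iic z).eq_deriv _ hd.hasDerivAt.hasDerivWithinAt
    (hasDerivWithinAt_steinSol_Iic hc₁ hnorm hg le_rfl)
  have hright := (uniqueDiffWithinAt_Ici z).eq_deriv _ hd.hasDerivAt.hasDerivWithinAt
    (hasDerivWithinAt_steinSol_Ici hc₁ hnorm hg le_rfl)
  linarith

theorem abs_deriv_steinSol_le_of_nonpos (hz : 0 ≤ z) (hw : w ≤ 0) :
    |deriv (steinSol g c₁ z) w| ≤ 2 * (1 - Ffun g c₁ z) := by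
  rcases (hw.trans hz).lt_or_eq with hwz | rfl
  · have := abs_le.1 (abs_steinSol_mul_le_of_nonpos hc₁ hnorm hg (z := z) hw)
    rw [deriv_steinSol_of_lt hc₁ hnorm hg hwz, abs_le]
    constructor <;> linarith
  · rw [deriv_steinSol_self hc₁ hnorm hg, abs_zero]
    linarith [Ffun_le_one hnorm hc₁ w]

theorem abs_deriv_steinSol_le_one (hw : 0 ≤ w) (hwz : w ≤ z) :
    |deriv (steinSol g c₁ z) w| ≤ 1 := by
  rcases hwz.lt_or_eq with hwz | rfl
  · have hfg := abs_le.1 (abs_steinSol_mul_le_of_nonneg hc₁ hnorm hg (z := z) hw)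
    have hfg₀ := steinSol_mul_nonneg hc₁ hnorm hg (z := z) hw
    have hF₁ := Ffun_le_one hnorm hc₁ z
    rw [deriv_steinSol_of_lt hc₁ hnorm hg hwz, abs_le]
    constructor <;> linarith
  · rw [deriv_steinSol_self hc₁ hnorm hg, abs_zero]
    exact zero_le_one

theorem abs_deriv_steinSol_le_of_gt (hz : 0 ≤ z) (hzw : z < w) :
    |deriv (steinSol g c₁ z) w| ≤ 2 * Ffun g c₁ z := by
  have hw : 0 ≤ w := hz.trans hzw.le
  have hfg := abs_le.1 (abs_steinSol_mul_le_of_nonneg hc₁ hnorm hg (z := z) hw)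
  have hfg₀ := steinSol_mul_nonneg hc₁ hnorm hg (z := z) hw
  rw [deriv_steinSol_of_gt hc₁ hnorm hg hzw, abs_le]
  constructor <;> linarith

end Stein

theorem stmt_12 (g : ℝ → ℝ) (c₁ c₂ c₃ : ℝ) (hg : GCond g c₂ c₃)
    (hc₁ : 0 < c₁)
    (hnorm : (∫ y : ℝ, pfun g c₁ y) = 1)
    (z : ℝ) (hz : 0 ≤ z) :
    ((∀ w : ℝ, w ≤ 0 → |steinSol g c₁ z w * g w| ≤ 1 - Ffun g c₁ z) ∧
      (∀ w : ℝ, 0 < w → |steinSol g c₁ z w * g w| ≤ Ffun g c₁ z)) ∧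
    ((∀ w : ℝ, w ≤ 0 → steinSol g c₁ z w ≤ (1 - Ffun g c₁ z) / c₁) ∧
      (∀ w : ℝ, 0 < w → steinSol g c₁ z w ≤ Ffun g c₁ z / c₁)) ∧
    ((∀ w : ℝ, w ≤ 0 → |deriv (steinSol g c₁ z) w| ≤ 2 * (1 - Ffun g c₁ z)) ∧
      (∀ w : ℝ, 0 < w → w ≤ z → |deriv (steinSol g c₁ z) w| ≤ 1) ∧
      (∀ w : ℝ, z < w → |deriv (steinSol g c₁ z) w| ≤ 2 * Ffun g c₁ z)) :=
  ⟨⟨fun _ hw => abs_steinSol_mul_le_of_nonpos hc₁ hnorm hg hw,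
      fun _ hw => abs_steinSol_mul_le_of_nonneg hc₁ hnorm hg hw.le⟩,
    ⟨fun _ hw => steinSol_le_of_nonpos hc₁ hnorm hg hw,
      fun _ hw => steinSol_le_of_nonneg hc₁ hnorm hg hw.le⟩,
    ⟨fun _ hw => abs_deriv_steinSol_le_of_nonpos hc₁ hnorm hg hz hw,
      fun _ hw hwz => abs_deriv_steinSol_le_one hc₁ hnorm hg hw.le hwz,
      fun _ hzw => abs_deriv_steinSol_le_of_gt hc₁ hnorm hg hz hzw⟩⟩
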